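/- Let R > 0, C₁ > 0, and for n ≥ 1 let E_n = {(r,ψ) ∈ ℝ × ℝ : C₁/(n+1) ≤ ψ ≤ C₁/n}. Define g : E_n → ℝ by g(r,ψ) = n R sin ψ. Then there is a constant C₂ = R C₁^{1/2}, independent of n, such that |g(r₁,ψ₁) - g(r₂,ψ₂)| ≤ C₂ |ψ₁ - ψ₂|^{1/2} for all (r₁,ψ₁), (r₂,ψ₂) ∈ E_n. -/

import Mathlib

/-!
Sliding preserves ψ, so `g` is `nR`-Lipschitz in ψ, a constant that blows up with `n`. But on the
cell `E_n` the angles are confined to an interval of length `C₁/(n(n+1)) ≤ C₁/n²`, so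
`n |ψ₁ - ψ₂| = (n |ψ₁ - ψ₂|^{1/2}) |ψ₁ - ψ₂|^{1/2} ≤ C₁^{1/2} |ψ₁ - ψ₂|^{1/2}`.
-/

open Real Set

lemma mul_le_sqrt_mul_sqrt_of_sq_mul_le {n d C : ℝ} (hd : 0 ≤ d) (h : n ^ 2 * d ≤ C) :
    n * d ≤ √C * √d :=
  calc n * d ≤ |n| * √d * √d := by
        rw [mul_assoc, mul_self_sqrt hd]
        exact mul_le_mul_of_nonneg_right (le_abs_self n) hd
    _ = √(n ^ 2 * d) * √d := by rw [sqrt_mul (sq_nonneg n), sqrt_sq_eq_abs]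
    _ ≤ √C * √d := by gcongr

lemma sq_mul_sub_div_add_one_le {n C : ℝ} (hn : 0 ≤ n) (hC : 0 ≤ C) :
    n ^ 2 * (C / n - C / (n + 1)) ≤ C := by
  rcases hn.eq_or_lt with rfl | hn
  · simpa using hC
  have key : n ^ 2 * (C / n - C / (n + 1)) = C * (n / (n + 1)) := by
    field_simp
    ring
  rw [key]
  exact mul_le_of_le_one_right hC ((div_le_one (by positivity)).2 (by linarith))

lemma sq_mul_abs_sub_le_of_mem_Icc {n C ψ₁ ψ₂ : ℝ} (hn : 0 ≤ n) (hC : 0 ≤ C)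
    (h₁ : ψ₁ ∈ Icc (C / (n + 1)) (C / n)) (h₂ : ψ₂ ∈ Icc (C / (n + 1)) (C / n)) :
    n ^ 2 * |ψ₁ - ψ₂| ≤ C := by
  have hdiam : |ψ₁ - ψ₂| ≤ C / n - C / (n + 1) := by
    rw [abs_sub_le_iff]
    constructor <;> linarith [h₁.1, h₁.2, h₂.1, h₂.2]
  calc n ^ 2 * |ψ₁ - ψ₂| ≤ n ^ 2 * (C / n - C / (n + 1)) := by gcongr
    _ ≤ C := sq_mul_sub_div_add_one_le hn hC

theorem stmt_4_general (R C₁ : ℝ) (hR : 0 < R) (hC₁ : 0 < C₁) (n : ℕ)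
    (En : Set (ℝ × ℝ))
    (hEn : En = {p : ℝ × ℝ | C₁ / (n + 1) ≤ p.2 ∧ p.2 ≤ C₁ / n})
    (g : ℝ × ℝ → ℝ) (hg : ∀ p : ℝ × ℝ, g p = (n : ℝ) * R * Real.sin p.2) :
    ∀ x₁ ∈ En, ∀ x₂ ∈ En,
      |g x₁ - g x₂| ≤ R * C₁ ^ ((1:ℝ)/2) * |x₁.2 - x₂.2| ^ ((1:ℝ)/2) := by
  subst hEn
  rintro ⟨r₁, ψ₁⟩ h₁ ⟨r₂, ψ₂⟩ h₂
  have hloc : (n : ℝ) ^ 2 * |ψ₁ - ψ₂| ≤ C₁ :=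
    sq_mul_abs_sub_le_of_mem_Icc n.cast_nonneg hC₁.le h₁ h₂
  rw [hg, hg, ← sqrt_eq_rpow, ← sqrt_eq_rpow, ← mul_sub, abs_mul,
    abs_of_nonneg (by positivity : (0 : ℝ) ≤ n * R)]
  calc n * R * |sin ψ₁ - sin ψ₂| ≤ R * (n * |ψ₁ - ψ₂|) := by
        rw [mul_comm (n : ℝ) R, mul_assoc]
        gcongr R * (n * ?_)
        exact abs_sin_sub_sin_le ψ₁ ψ₂
    _ ≤ R * (√C₁ * √|ψ₁ - ψ₂|) := by
        gcongr R * ?_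
        exact mul_le_sqrt_mul_sqrt_of_sq_mul_le (abs_nonneg _) hloc
    _ = R * √C₁ * √|ψ₁ - ψ₂| := by ring

/-- The sliding time g(r,ψ) = nR sin ψ is Hölder with exponent 1/2 on the cell
E_n = {C₁/(n+1) ≤ ψ ≤ C₁/n}, with constant C₂ = R C₁^{1/2} independent of n. -/
theorem stmt_4 (R C₁ : ℝ) (hR : 0 < R) (hC₁ : 0 < C₁) (n : ℕ) (hn : 1 ≤ n)
    (En : Set (ℝ × ℝ))
    (hEn : En = {p : ℝ × ℝ | C₁ / (n + 1) ≤ p.2 ∧ p.2 ≤ C₁ / n})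
    (g : ℝ × ℝ → ℝ) (hg : ∀ p : ℝ × ℝ, g p = (n : ℝ) * R * Real.sin p.2) :
    ∀ x₁ ∈ En, ∀ x₂ ∈ En,
      |g x₁ - g x₂| ≤ R * C₁ ^ ((1:ℝ)/2) * |x₁.2 - x₂.2| ^ ((1:ℝ)/2) :=
  stmt_4_general R C₁ hR hC₁ n En hEn g hg
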